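/- Let β(b) = (b·c·n - τ)·(ln 2)/√(b·v·n) for b > 0 with positive constants c, n, v, τ. Then the second derivative of β with respect to b equals -ln(2)·(b·c·n + 3τ)/(4·b²·√(b·v·n)), which is strictly negative for all b > 0; hence β is strictly concave on (0, ∞). -/

import Mathlib

/-!
Write `a = c n`, `k = v n`, `t = τ`, `L = ln 2`. The quotient rule, with `√(x k)² = x k` to
clear the square roots, gives `β' = L (x a + t) / (2 x √(x k))` and then
`β'' = -L (x a + 3 t) / (4 x² √(x k))`. As `a ≥ 0` and `t, L > 0` this is negative on
`(0, ∞)`, and a negative second derivative on an interval gives strict concavity.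
-/

open Real

section
variable {a k t L x : ℝ}

theorem hasDerivAt_sub_mul_div_sqrt (hk : 0 < k) (hx : 0 < x) :
    HasDerivAt (fun y => (y * a - t) * L / √(y * k))
      (L * (x * a + t) / (2 * x * √(x * k))) x := by
  have hxk : 0 < x * k := by positivity
  have hsqrt := ((hasDerivAt_id' x).mul_const k).sqrt hxk.ne'
  have hnum := (((hasDerivAt_id' x).mul_const a).sub_const t).mul_const L
  refine (hnum.div hsqrt (sqrt_pos.2 hxk).ne').congr_deriv ?_
  have hsq := sq_sqrt hxk.le
  field_simp
  linear_combination L * (x * a - t) * hsq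

theorem hasDerivAt_add_mul_div_mul_sqrt (hk : 0 < k) (hx : 0 < x) :
    HasDerivAt (fun y => L * (y * a + t) / (2 * y * √(y * k)))
      (-L * (x * a + 3 * t) / (4 * x ^ 2 * √(x * k))) x := by
  have hxk : 0 < x * k := by positivity
  have hsqrt := ((hasDerivAt_id' x).mul_const k).sqrt hxk.ne'
  have hnum := (((hasDerivAt_id' x).mul_const a).add_const t).const_mul L
  have hden := ((hasDerivAt_id' x).const_mul 2).fun_mul hsqrt
  refine (hnum.div hden (by positivity)).congr_deriv ?_
  have hsq := sq_sqrt hxk.le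
  field_simp
  linear_combination 4 * L * (x * a + t) * hsq

theorem deriv_deriv_sub_mul_div_sqrt (hk : 0 < k) (hx : 0 < x) :
    deriv (deriv fun y => (y * a - t) * L / √(y * k)) x
      = -L * (x * a + 3 * t) / (4 * x ^ 2 * √(x * k)) := by
  have hderiv : deriv (fun y => (y * a - t) * L / √(y * k))
      =ᶠ[nhds x] fun y => L * (y * a + t) / (2 * y * √(y * k)) :=
    Filter.eventually_of_mem (Ioi_mem_nhds hx) fun y hy =>
      (hasDerivAt_sub_mul_div_sqrt hk hy).deriv
  rw [hderiv.deriv_eq]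
  exact (hasDerivAt_add_mul_div_mul_sqrt hk hx).deriv

theorem neg_mul_add_div_mul_sqrt_neg (hk : 0 < k) (ha : 0 ≤ a) (ht : 0 < t) (hL : 0 < L)
    (hx : 0 < x) : -L * (x * a + 3 * t) / (4 * x ^ 2 * √(x * k)) < 0 := by
  have hsqrt : 0 < √(x * k) := sqrt_pos.2 (by positivity)
  exact div_neg_of_neg_of_pos (mul_neg_of_neg_of_pos (neg_neg_of_pos hL) (by positivity))
    (by positivity)

theorem strictConcaveOn_sub_mul_div_sqrt (hk : 0 < k) (ha : 0 ≤ a) (ht : 0 < t) (hL : 0 < L) :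
    StrictConcaveOn ℝ (Set.Ioi 0) fun y => (y * a - t) * L / √(y * k) := by
  refine strictConcaveOn_of_deriv2_neg (convex_Ioi 0)
    (fun y hy => (hasDerivAt_sub_mul_div_sqrt hk hy).continuousAt.continuousWithinAt) ?_
  rw [interior_Ioi]
  intro y hy
  rw [Function.iterate_succ_apply, Function.iterate_one, deriv_deriv_sub_mul_div_sqrt hk hy]
  exact neg_mul_add_div_mul_sqrt_neg hk ha ht hL hy

end

/-- For `β(b) = (b·c·n - τ)·ln 2 / √(b·v·n)` with positive constants, the second
derivative equals `-ln 2·(b·c·n + 3τ)/(4b²√(b·v·n)) < 0` for `b > 0`, hence `β`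
is strictly concave on `(0, ∞)`. -/
theorem stmt_7 (c n v τ : ℝ) (hc : 0 < c) (hn : 0 < n) (hv : 0 < v) (hτ : 0 < τ) :
    (∀ b : ℝ, 0 < b →
      deriv (deriv (fun x : ℝ => (x * c * n - τ) * Real.log 2 / Real.sqrt (x * v * n))) b
        = -(Real.log 2) * (b * c * n + 3 * τ) / (4 * b ^ 2 * Real.sqrt (b * v * n)) ∧
      deriv (deriv (fun x : ℝ => (x * c * n - τ) * Real.log 2 / Real.sqrt (x * v * n))) b
        < 0) ∧
    StrictConcaveOn ℝ (Set.Ioi (0 : ℝ))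
      (fun x : ℝ => (x * c * n - τ) * Real.log 2 / Real.sqrt (x * v * n)) := by
  have hk : 0 < v * n := by positivity
  have ha : 0 ≤ c * n := by positivity
  have hL : 0 < log 2 := log_pos one_lt_two
  refine ⟨fun b hb => ?_,
    by simpa only [mul_assoc] using strictConcaveOn_sub_mul_div_sqrt hk ha hτ hL⟩
  have h2 := deriv_deriv_sub_mul_div_sqrt (a := c * n) (t := τ) (L := log 2) hk hb
  have hneg := neg_mul_add_div_mul_sqrt_neg hk ha hτ hL hb
  simp only [mul_assoc] at h2 hneg ⊢
  exact ⟨h2, h2 ▸ hneg⟩
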